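/- arXiv:2103.10520 — 3 statements merged into one kernel-verified Lean document; each statement's English description precedes it below -/
import Mathlib

section
/- Let U : Set F → ℝ be a monotone submodular function with U(∅) = 0 on a finite ground set F, and let m ≥ 1. Construct greedily G_0 = ∅ and G_{i+1} = G_i ∪ {g_{i+1}} where g_{i+1} ∈ F maximizes U(G_i ∪ {g}) - U(G_i) over g ∈ F. Then U(G_m) ≥ (1 - (1 - 1/m)^m) · max{U(A) : A ⊆ F, |A| ≤ m}. -/
/-! Let `A` have at most `m` elements. By submodularity the gain of adding all of `A` to `G i`
is at most the sum of the single-element gains, each of which is at most the greedy gain, so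
`U A - U (G i) ≤ m * (U (G (i + 1)) - U (G i))`. Hence the gap `U A - U (G i)` shrinks by a
factor `1 - 1/m` at every step and is at most `(1 - 1/m) ^ m * U A` after `m` steps. -/

section Submodular

variable {F : Type*} [DecidableEq F] (U : Finset F → ℝ)

theorem sub_le_sum_marginal_of_submodular
    (submod : ∀ A B : Finset F, A ⊆ B → ∀ s : F,
      U (insert s A) - U A ≥ U (insert s B) - U B)
    (B S : Finset F) :
    U (B ∪ S) - U B ≤ ∑ s ∈ S, (U (insert s B) - U B) := by
  induction S using Finset.induction_on with
  | empty => simp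
  | insert s S hs ih =>
    rw [Finset.sum_insert hs, Finset.union_insert]
    have := submod B (B ∪ S) Finset.subset_union_left s
    linarith

theorem sub_le_mul_greedy_gain
    (mono : ∀ A B : Finset F, A ⊆ B → U A ≤ U B)
    (submod : ∀ A B : Finset F, A ⊆ B → ∀ s : F,
      U (insert s A) - U A ≥ U (insert s B) - U B)
    {A B : Finset F} {g : F}
    (hg : ∀ g' : F, U (insert g' B) - U B ≤ U (insert g B) - U B)
    {k : ℝ} (hk : (A.card : ℝ) ≤ k) :
    U A - U B ≤ k * (U (insert g B) - U B) := by
  have gain_nonneg : 0 ≤ U (insert g B) - U B :=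
    sub_nonneg.mpr (mono _ _ (Finset.subset_insert g B))
  calc U A - U B ≤ U (B ∪ A) - U B := by
        gcongr; exact mono _ _ Finset.subset_union_right
    _ ≤ ∑ s ∈ A, (U (insert s B) - U B) := sub_le_sum_marginal_of_submodular U submod B A
    _ ≤ A.card • (U (insert g B) - U B) := Finset.sum_le_card_nsmul _ _ _ fun s _ => hg s
    _ ≤ k * (U (insert g B) - U B) := by
        rw [nsmul_eq_mul]; gcongr

end Submodular

/-- For `m = 0` this holds because `1 / 0 = 0` in `ℝ`. -/
theorem le_one_sub_one_div_mul {m d d' : ℝ} (hm : 0 ≤ m) (hd' : d' ≤ d)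
    (h : d ≤ m * (d - d')) : d' ≤ (1 - 1 / m) * d := by
  rcases hm.eq_or_lt with rfl | hm
  · simpa using hd'
  · have : d / m ≤ d - d' := by rwa [div_le_iff₀ hm, mul_comm]
    have expand : (1 - 1 / m) * d = d - d / m := by ring
    linarith

theorem greedy_guarantee_general {F : Type*} [DecidableEq F]
    (U : Finset F → ℝ)
    (mono : ∀ A B : Finset F, A ⊆ B → U A ≤ U B)
    (submod : ∀ A B : Finset F, A ⊆ B → ∀ s : F,
      U (insert s A) - U A ≥ U (insert s B) - U B)
    (hempty : U ∅ = 0)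
    (m : ℕ)
    (G : ℕ → Finset F) (hG0 : G 0 = ∅)
    (hGstep : ∀ i : ℕ, ∃ g : F, G (i + 1) = insert g (G i) ∧
      ∀ g' : F, U (insert g' (G i)) - U (G i) ≤ U (insert g (G i)) - U (G i)) :
    ∀ A : Finset F, A.card ≤ m →
      (1 - (1 - 1 / (m : ℝ)) ^ m) * U A ≤ U (G m) := by
  intro A hA
  have gap_step : ∀ i, U A - U (G (i + 1)) ≤ (1 - 1 / (m : ℝ)) * (U A - U (G i)) := by
    intro i
    obtain ⟨g, hg, hmax⟩ := hGstep i
    rw [hg]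
    apply le_one_sub_one_div_mul (Nat.cast_nonneg m)
    · linarith [mono _ _ (Finset.subset_insert g (G i))]
    · convert sub_le_mul_greedy_gain U mono submod hmax (A := A) (Nat.cast_le.mpr hA)
        using 2
      ring
  have gap_decay := le_geom (u := fun i => U A - U (G i))
    (Nat.one_sub_one_div_cast_nonneg m) m fun i _ => gap_step i
  simp only [hG0, hempty, sub_zero] at gap_decay
  linarith

theorem greedy_guarantee {F : Type*} [Fintype F] [Nonempty F] [DecidableEq F]
    (U : Finset F → ℝ)
    (mono : ∀ A B : Finset F, A ⊆ B → U A ≤ U B)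
    (submod : ∀ A B : Finset F, A ⊆ B → ∀ s : F,
      U (insert s A) - U A ≥ U (insert s B) - U B)
    (hempty : U ∅ = 0)
    (m : ℕ) (hm : 1 ≤ m)
    (G : ℕ → Finset F) (hG0 : G 0 = ∅)
    (hGstep : ∀ i : ℕ, ∃ g : F, G (i + 1) = insert g (G i) ∧
      ∀ g' : F, U (insert g' (G i)) - U (G i) ≤ U (insert g (G i)) - U (G i)) :
    ∀ A : Finset F, A.card ≤ m →
      (1 - (1 - 1 / (m : ℝ)) ^ m) * U A ≤ U (G m) :=
  greedy_guarantee_general U mono submod hempty m G hG0 hGstep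
end

section
/- Let U be monotone submodular with U(∅) = 0 on a finite ground set F, and let the greedy sequence G_i be as in the standard greedy algorithm. Then for each step i, U(G_{i+1}) - U(G_i) ≥ (OPT - U(G_i))/m, where OPT = max{U(A) : |A| ≤ m}. -/
/-!
Monotonicity bounds `U A - U (G i)` by `U (A ∪ G i) - U (G i)`, which submodularity splits into
the marginal gains at `G i` of the at most `m` elements of `A \ G i`; each of these is at most
the greedy gain.
-/

open Finset

section

variable {α β : Type*} [DecidableEq α] [AddCommGroup β] [PartialOrder β] [IsOrderedAddMonoid β]

/-- Submodularity in its diminishing-returns form. -/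
def DiminishingReturns (U : Finset α → β) : Prop :=
  ∀ A B : Finset α, A ⊆ B → ∀ s : α, U (insert s B) - U B ≤ U (insert s A) - U A

namespace DiminishingReturns

variable {U : Finset α → β}

theorem sub_le_sum_marginal (hU : DiminishingReturns U) (A B : Finset α) :
    U (A ∪ B) - U B ≤ ∑ a ∈ A \ B, (U (insert a B) - U B) := by
  induction A using Finset.induction_on with
  | empty => simp
  | @insert a A haA ih =>
    by_cases haB : a ∈ B
    · rwa [insert_union, insert_eq_of_mem (mem_union_right A haB), insert_sdiff_of_mem _ haB]
    · have hgain : U (insert a (A ∪ B)) - U (A ∪ B) ≤ U (insert a B) - U B :=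
        hU B (A ∪ B) subset_union_right a
      rw [insert_union, insert_sdiff_of_notMem _ haB,
        sum_insert fun h ↦ haA (mem_sdiff.1 h).1]
      calc U (insert a (A ∪ B)) - U B
          = (U (insert a (A ∪ B)) - U (A ∪ B)) + (U (A ∪ B) - U B) := by abel
        _ ≤ (U (insert a B) - U B) + ∑ x ∈ A \ B, (U (insert x B) - U B) := add_le_add hgain ih

theorem sub_le_nsmul_of_marginal_le (hU : DiminishingReturns U) (hmono : Monotone U)
    {A B : Finset α} {m : ℕ} {d : β} (hA : #A ≤ m) (hd : ∀ a, U (insert a B) - U B ≤ d)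
    (hd₀ : 0 ≤ d) : U A - U B ≤ m • d :=
  calc U A - U B ≤ U (A ∪ B) - U B := sub_le_sub_right (hmono subset_union_left) _
    _ ≤ ∑ a ∈ A \ B, (U (insert a B) - U B) := hU.sub_le_sum_marginal A B
    _ ≤ #(A \ B) • d := sum_le_card_nsmul _ _ _ fun a _ ↦ hd a
    _ ≤ m • d := nsmul_le_nsmul_left hd₀ ((card_le_card sdiff_subset).trans hA)

end DiminishingReturns

end

theorem greedy_step_inequality_general {F : Type*} [DecidableEq F]
    (U : Finset F → ℝ)
    (mono : ∀ A B : Finset F, A ⊆ B → U A ≤ U B)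
    (submod : ∀ A B : Finset F, A ⊆ B → ∀ s : F,
      U (insert s A) - U A ≥ U (insert s B) - U B)
    (m : ℕ)
    (G : ℕ → Finset F)
    (hGstep : ∀ i : ℕ, ∃ g : F, G (i + 1) = insert g (G i) ∧
      ∀ g' : F, U (insert g' (G i)) - U (G i) ≤ U (insert g (G i)) - U (G i)) :
    ∀ i : ℕ, ∀ A : Finset F, A.card ≤ m →
      (U A - U (G i)) / (m : ℝ) ≤ U (G (i + 1)) - U (G i) := by
  intro i A hA
  obtain ⟨g, hg, hgreedy⟩ := hGstep i
  have hgain : 0 ≤ U (insert g (G i)) - U (G i) := sub_nonneg.2 (mono _ _ (subset_insert g _))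
  rw [hg]
  refine div_le_of_le_mul₀ m.cast_nonneg hgain ?_
  rw [mul_comm, ← nsmul_eq_mul]
  exact DiminishingReturns.sub_le_nsmul_of_marginal_le submod (fun A B ↦ mono A B) hA hgreedy hgain

theorem greedy_step_inequality {F : Type*} [Fintype F] [Nonempty F] [DecidableEq F]
    (U : Finset F → ℝ)
    (mono : ∀ A B : Finset F, A ⊆ B → U A ≤ U B)
    (submod : ∀ A B : Finset F, A ⊆ B → ∀ s : F,
      U (insert s A) - U A ≥ U (insert s B) - U B)
    (hempty : U ∅ = 0)
    (m : ℕ) (hm : 1 ≤ m)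
    (G : ℕ → Finset F) (hG0 : G 0 = ∅)
    (hGstep : ∀ i : ℕ, ∃ g : F, G (i + 1) = insert g (G i) ∧
      ∀ g' : F, U (insert g' (G i)) - U (G i) ≤ U (insert g (G i)) - U (G i)) :
    ∀ i : ℕ, ∀ A : Finset F, A.card ≤ m →
      (U A - U (G i)) / (m : ℝ) ≤ U (G (i + 1)) - U (G i) :=
  greedy_step_inequality_general U mono submod m G hGstep
end

section
/- Let rows r ∈ R each have a prior p_r, a true value v_r, and a finite set V_r of currently relevant proposed values, with per-row deviation d_r = min_{x ∈ V_r ∪ {p_r}} |x - v_r|. For any subset R' ⊆ R of rows, adding any single new fact whose scope is contained in R' increases the total utility, summed over r ∈ R, by at most ∑_{r ∈ R'} d_r. -/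
theorem fact_pruning_bound {ρ : Type*} [DecidableEq ρ]
    (R : Finset ρ) (p v : ρ → ℝ) (V : ρ → Finset ℝ)
    (R' : Finset ρ) (hR' : R' ⊆ R)
    (scope : Finset ρ) (hscope : scope ⊆ R') (w : ℝ) :
    (∑ r ∈ R, (insert (p r) (V r)).inf' (Finset.insert_nonempty _ _) (fun x => |x - v r|)) -
      (∑ r ∈ R, if r ∈ scope then
          min ((insert (p r) (V r)).inf' (Finset.insert_nonempty _ _) (fun x => |x - v r|))
              (|w - v r|)
        else (insert (p r) (V r)).inf' (Finset.insert_nonempty _ _) (fun x => |x - v r|)) ≤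
    ∑ r ∈ R', (insert (p r) (V r)).inf' (Finset.insert_nonempty _ _) (fun x => |x - v r|) := by
  set d : ρ → ℝ := fun r => (insert (p r) (V r)).inf' (Finset.insert_nonempty _ _)
      (fun x => |x - v r|) with hd
  have hdnn : ∀ r, 0 ≤ d r := by
    intro r
    rw [hd]
    simp only [Finset.le_inf'_iff]
    intro x _
    exact abs_nonneg _
  rw [← Finset.sum_sub_distrib]
  calc ∑ r ∈ R, (d r - if r ∈ scope then min (d r) |w - v r| else d r)
      ≤ ∑ r ∈ R', d r := by
        rw [← Finset.sum_subset hR' (f := fun r =>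
            d r - if r ∈ scope then min (d r) |w - v r| else d r)]
        · apply Finset.sum_le_sum
          intro r _
          by_cases h : r ∈ scope <;> simp [h, min_le_left, hdnn r]
        · intro r _ hr
          have : r ∉ scope := fun h => hr (hscope h)
          simp [this]
end
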